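/- arXiv:2502.04859 — 4 statements merged into one kernel-verified Lean document; each statement's English description precedes it below -/
import Mathlib

section
/- Let Ω: ℝ → ℝ satisfy |Ω(x) − Ω(y)| ≤ K₀|x−y|^α for all x, y ∈ ℝ, where α ∈ (0,1) and K₀ > 0, and assume Ω ∈ L¹(ℝ, (1+x²)^{−1} dx). Then for every t > 0 the function Q̃_t Ω is differentiable on ℝ, with (Q̃_t Ω)'(x) = (1/π) ∫_ℝ (Ω(x−y) − Ω(x)) (t² − y²)/((y²+t²)²) dy, and |(Q̃_t Ω)'(x)| ≤ K₀ t^{α−1} / cos(πα/2) for every x ∈ ℝ. -/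
/-!
Differentiating under the integral sign (the kernel and its `u`-derivative are `O((1 + y²)⁻¹)`
locally uniformly in `u`), the derivative of `Q̃_t Ω` at `x` is `(1/π) ∫ Ω(y) k'(x - y) dy`,
where `k(z) = z / (z² + t²)`. As `k` vanishes at `±∞`, `∫ k' = 0`, so after translating,
`Ω(x)` may be subtracted from `Ω(x - y)`. Since `|k'(y)| ≤ 1 / (y² + t²)`, the Hölder bound
reduces the estimate to `∫ |y|^α / (y² + t²) dy = π t^(α-1) / cos(πα/2)`. After scaling out
`t`, writing `1 / (1 + u²) = ∫₀^∞ e^{-(1+u²)s} ds` and swapping the integrals turns this into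
`Γ((1+α)/2) Γ((1-α)/2) / 2`, which the reflection formula evaluates.
-/

open MeasureTheory Real Set Filter Topology

lemma integral_Ioi_exp_neg_mul {b : ℝ} (hb : 0 < b) :
    ∫ s in Ioi (0 : ℝ), exp (-b * s) = 1 / b := by
  rw [integral_exp_mul_Ioi (neg_lt_zero.mpr hb), mul_zero, exp_zero, neg_div_neg_eq]

lemma integrableOn_Ioi_rpow_div_sq_add_sq {α t : ℝ} (hα0 : -1 < α) (hα1 : α < 1)
    (ht : 0 < t) :
    IntegrableOn (fun y : ℝ => y ^ α / (y ^ 2 + t ^ 2)) (Ioi 0) := by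
  have hmeas : AEStronglyMeasurable (fun y : ℝ => y ^ α / (y ^ 2 + t ^ 2)) :=
    (by fun_prop : Measurable fun y : ℝ => y ^ α / (y ^ 2 + t ^ 2)).aestronglyMeasurable
  have hle {c y : ℝ} (hc : 0 < c) (hy : 0 < y) (hcy : c ≤ y ^ 2 + t ^ 2) :
      ‖y ^ α / (y ^ 2 + t ^ 2)‖ ≤ y ^ α / c := by
    rw [norm_of_nonneg (by positivity)]
    exact div_le_div_of_nonneg_left (by positivity) hc hcy
  rw [← Ioc_union_Ioi_eq_Ioi zero_le_one, integrableOn_union]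
  constructor
  · refine ((intervalIntegral.intervalIntegrable_rpow' hα0).1.div_const (t ^ 2)).mono'
      hmeas.restrict ?_
    filter_upwards [ae_restrict_mem measurableSet_Ioc] with y hy
    exact hle (by positivity) hy.1 (by nlinarith)
  · refine (integrableOn_Ioi_rpow_of_lt (by linarith : α - 2 < -1) one_pos).mono'
      hmeas.restrict ?_
    filter_upwards [ae_restrict_mem measurableSet_Ioi] with y (hy : 1 < y)
    rw [rpow_sub (by linarith), rpow_two]
    exact hle (by positivity) (by linarith) (by nlinarith)

lemma integral_Ioi_rpow_div_one_add_sq {α : ℝ} (hα0 : -1 < α) (hα1 : α < 1) :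
    ∫ u in Ioi (0 : ℝ), u ^ α / (1 + u ^ 2) = π / (2 * cos (π * α / 2)) := by
  set a := (α + 1) / 2 with ha
  let f : ℝ → ℝ → ℝ := fun u s => u ^ α * exp (-(1 + u ^ 2) * s)
  have h_inner_u (u : ℝ) (hu : 0 < u) : ∫ s in Ioi 0, f u s = u ^ α / (1 + u ^ 2) := by
    rw [integral_const_mul, integral_Ioi_exp_neg_mul (by positivity), mul_one_div]
  have h_inner_s (s : ℝ) (hs : 0 < s) :
      ∫ u in Ioi 0, f u s = Gamma a / 2 * (exp (-s) * s ^ ((1 - a) - 1)) := by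
    have hfs : ∀ u, f u s = exp (-s) * (u ^ α * exp (-s * u ^ (2 : ℝ))) := fun u => by
      simp only [f]
      rw [rpow_two, mul_left_comm, ← exp_add]
      ring_nf
    simp_rw [hfs]
    rw [integral_const_mul, integral_rpow_mul_exp_neg_mul_rpow two_pos hα0 hs,
      show -(α + 1) / 2 = (1 - a) - 1 by rw [ha]; ring]
    ring
  have hf_int : Integrable (Function.uncurry f)
      ((volume.restrict (Ioi (0 : ℝ))).prod (volume.restrict (Ioi (0 : ℝ)))) := by
    rw [integrable_prod_iff (by fun_prop)]
    refine ⟨Eventually.of_forall fun u => show Integrable (f u) _ from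
      (exp_neg_integrableOn_Ioi 0 (by positivity : (0 : ℝ) < 1 + u ^ 2)).const_mul _, ?_⟩
    refine ((integrableOn_Ioi_rpow_div_sq_add_sq hα0 hα1 one_pos).congr_fun
      (g := fun u => ∫ s in Ioi 0, f u s) (fun u hu => ?_) measurableSet_Ioi).congr ?_
    · beta_reduce
      rw [h_inner_u u hu, one_pow, add_comm]
    filter_upwards [ae_restrict_mem measurableSet_Ioi] with u (hu : 0 < u)
    refine integral_congr_ae (Eventually.of_forall fun s => ?_)
    exact (norm_of_nonneg (by positivity)).symm
  have hsin : sin (π * a) = cos (π * α / 2) := by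
    rw [ha, show π * ((α + 1) / 2) = π * α / 2 + π / 2 by ring, sin_add_pi_div_two]
  calc ∫ u in Ioi (0 : ℝ), u ^ α / (1 + u ^ 2)
      = ∫ u in Ioi (0 : ℝ), ∫ s in Ioi (0 : ℝ), f u s :=
        setIntegral_congr_fun measurableSet_Ioi fun u hu => (h_inner_u u hu).symm
    _ = ∫ s in Ioi (0 : ℝ), ∫ u in Ioi (0 : ℝ), f u s := integral_integral_swap hf_int
    _ = ∫ s in Ioi (0 : ℝ), Gamma a / 2 * (exp (-s) * s ^ ((1 - a) - 1)) :=
        setIntegral_congr_fun measurableSet_Ioi h_inner_s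
    _ = Gamma a * Gamma (1 - a) / 2 := by
        rw [integral_const_mul, ← Gamma_eq_integral (by rw [ha]; linarith)]; ring
    _ = π / (2 * cos (π * α / 2)) := by
        rw [Gamma_mul_Gamma_one_sub, hsin, div_div, mul_comm]

lemma MeasureTheory.IntegrableOn.comp_abs {f : ℝ → ℝ} (hf : IntegrableOn f (Ioi 0)) :
    Integrable (fun x => f |x|) := by
  have hIoi : IntegrableOn (fun x => f |x|) (Ioi 0) :=
    hf.congr_fun (fun x (hx : 0 < x) => by rw [abs_of_pos hx]) measurableSet_Ioi
  have hIic : IntegrableOn (fun x => f |x|) (Iic 0) := by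
    have hneg : MeasurableEmbedding fun x : ℝ => -x := (Homeomorph.neg ℝ).measurableEmbedding
    rw [← Measure.map_neg_eq_self (volume : Measure ℝ), hneg.integrableOn_map_iff]
    simp_rw [Function.comp_def, abs_neg, neg_preimage, neg_Iic, neg_zero]
    exact (integrableOn_Ici_iff_integrableOn_Ioi).mpr hIoi
  rw [← integrableOn_univ, ← Iic_union_Ioi (a := (0 : ℝ))]
  exact hIic.union hIoi

lemma integral_Ioi_rpow_div_sq_add_sq (α : ℝ) {t : ℝ} (ht : 0 < t) :
    ∫ y in Ioi (0 : ℝ), y ^ α / (y ^ 2 + t ^ 2) =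
      t ^ (α - 1) * ∫ u in Ioi (0 : ℝ), u ^ α / (1 + u ^ 2) := by
  have hscale : ∀ u ∈ Ioi (0 : ℝ),
      (t * u) ^ α / ((t * u) ^ 2 + t ^ 2) = t ^ α / t ^ 2 * (u ^ α / (1 + u ^ 2)) :=
    fun u (hu : 0 < u) => by rw [mul_rpow ht.le hu.le]; field_simp; ring
  have h := integral_comp_mul_left_Ioi' (fun y => y ^ α / (y ^ 2 + t ^ 2)) 0 ht
  rw [mul_zero] at h
  rw [← h, setIntegral_congr_fun measurableSet_Ioi hscale,
    integral_const_mul, smul_eq_mul, ← mul_assoc, rpow_sub_one ht.ne']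
  field_simp

lemma integrable_abs_rpow_div_sq_add_sq {α t : ℝ} (hα0 : -1 < α) (hα1 : α < 1) (ht : 0 < t) :
    Integrable (fun y : ℝ => |y| ^ α / (y ^ 2 + t ^ 2)) := by
  simpa only [sq_abs] using (integrableOn_Ioi_rpow_div_sq_add_sq hα0 hα1 ht).comp_abs

lemma integral_abs_rpow_div_sq_add_sq {α t : ℝ} (hα0 : -1 < α) (hα1 : α < 1) (ht : 0 < t) :
    ∫ y : ℝ, |y| ^ α / (y ^ 2 + t ^ 2) = π * t ^ (α - 1) / cos (π * α / 2) := by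
  have h := integral_comp_abs (f := fun y : ℝ => y ^ α / (y ^ 2 + t ^ 2))
  simp only [sq_abs] at h
  rw [h, integral_Ioi_rpow_div_sq_add_sq α ht, integral_Ioi_rpow_div_one_add_sq hα0 hα1]
  field_simp

lemma hasDerivAt_div_sq_add_sq {t : ℝ} (ht : t ≠ 0) (y : ℝ) :
    HasDerivAt (fun z : ℝ => z / (z ^ 2 + t ^ 2)) ((t ^ 2 - y ^ 2) / (y ^ 2 + t ^ 2) ^ 2) y := by
  refine ((hasDerivAt_id' y).div ((hasDerivAt_pow 2 y).add_const (t ^ 2))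
    (by positivity)).congr_deriv ?_
  ring

lemma abs_sq_sub_sq_div_sq_add_sq_sq_le (t y : ℝ) :
    |(t ^ 2 - y ^ 2) / (y ^ 2 + t ^ 2) ^ 2| ≤ 1 / (y ^ 2 + t ^ 2) := by
  have hnum : |t ^ 2 - y ^ 2| ≤ y ^ 2 + t ^ 2 :=
    abs_le.mpr ⟨by linarith [sq_nonneg t], by linarith [sq_nonneg y]⟩
  calc |(t ^ 2 - y ^ 2) / (y ^ 2 + t ^ 2) ^ 2|
      = |t ^ 2 - y ^ 2| / (y ^ 2 + t ^ 2) ^ 2 := by rw [abs_div, abs_sq]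
    _ ≤ (y ^ 2 + t ^ 2) / (y ^ 2 + t ^ 2) ^ 2 := by gcongr
    _ = 1 / (y ^ 2 + t ^ 2) := by rw [pow_two (y ^ 2 + t ^ 2), div_self_mul_self', one_div]

lemma one_div_sub_sq_add_sq_le {t : ℝ} (ht : t ≠ 0) {u R : ℝ} (hu : |u| ≤ R) (y : ℝ) :
    1 / ((u - y) ^ 2 + t ^ 2) ≤ ((1 + 2 * R ^ 2) / t ^ 2 + 2) * (1 + y ^ 2)⁻¹ := by
  have huR : u ^ 2 ≤ R ^ 2 := sq_le_sq' (abs_le.mp hu).1 (abs_le.mp hu).2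
  have hexpand : ((1 + 2 * R ^ 2) / t ^ 2 + 2) * ((u - y) ^ 2 + t ^ 2) =
      (1 + 2 * R ^ 2) * ((u - y) ^ 2 / t ^ 2) + (1 + 2 * R ^ 2) + 2 * (u - y) ^ 2 + 2 * t ^ 2 := by
    field_simp
    ring
  have hfirst : 0 ≤ (1 + 2 * R ^ 2) * ((u - y) ^ 2 / t ^ 2) := by positivity
  rw [← div_eq_mul_inv, div_le_div_iff₀ (by positivity) (by positivity), one_mul, hexpand]
  nlinarith [sq_nonneg (u + (u - y)), sq_nonneg t]

lemma integrable_sq_sub_sq_div_sq_add_sq_sq {t : ℝ} (ht : t ≠ 0) :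
    Integrable (fun y : ℝ => (t ^ 2 - y ^ 2) / (y ^ 2 + t ^ 2) ^ 2) := by
  refine (integrable_inv_one_add_sq.const_mul ((1 + 2 * 0 ^ 2) / t ^ 2 + 2)).mono'
    ((Continuous.div (by fun_prop) (by fun_prop) fun y => by positivity).aestronglyMeasurable) ?_
  refine Eventually.of_forall fun y => ?_
  have h := one_div_sub_sq_add_sq_le ht (abs_zero.le : |(0 : ℝ)| ≤ 0) y
  rw [zero_sub, neg_sq] at h
  exact (abs_sq_sub_sq_div_sq_add_sq_sq_le t y).trans h

lemma abs_div_sq_add_sq_le (t z : ℝ) : |z / (z ^ 2 + t ^ 2)| ≤ |z|⁻¹ := by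
  rcases eq_or_ne z 0 with rfl | hz
  · simp
  calc |z / (z ^ 2 + t ^ 2)| = |z| / (z ^ 2 + t ^ 2) := by
        rw [abs_div, abs_of_nonneg (by positivity : (0 : ℝ) ≤ z ^ 2 + t ^ 2)]
    _ ≤ |z| / |z| ^ 2 := by
        rw [sq_abs]
        gcongr
        linarith [sq_nonneg t]
    _ = |z|⁻¹ := by rw [pow_two, div_self_mul_self']

lemma tendsto_div_sq_add_sq_zero {l : Filter ℝ} (hl : Tendsto (|·|) l atTop) (t : ℝ) :
    Tendsto (fun z : ℝ => z / (z ^ 2 + t ^ 2)) l (𝓝 0) :=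
  squeeze_zero_norm (abs_div_sq_add_sq_le t) (tendsto_inv_atTop_zero.comp hl)

lemma integral_sq_sub_sq_div_sq_add_sq_sq {t : ℝ} (ht : t ≠ 0) :
    ∫ y : ℝ, (t ^ 2 - y ^ 2) / (y ^ 2 + t ^ 2) ^ 2 = 0 := by
  rw [integral_of_hasDerivAt_of_tendsto (hasDerivAt_div_sq_add_sq ht)
    (integrable_sq_sub_sq_div_sq_add_sq_sq ht)
    (tendsto_div_sq_add_sq_zero tendsto_abs_atBot_atTop t)
    (tendsto_div_sq_add_sq_zero tendsto_abs_atTop_atTop t), sub_zero]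

lemma abs_sub_div_sq_add_sq_add_div_sq_add_one_le {t : ℝ} (ht : 0 < t) (u y : ℝ) :
    |(u - y) / ((u - y) ^ 2 + t ^ 2) + y / (y ^ 2 + 1)| ≤
      ((|u| + t) ^ 2 + 1) / (2 * t) * (1 + y ^ 2)⁻¹ := by
  -- each summand is only `O(1 / |y|)`, but their `y / y²` tails cancel
  have hsum : (u - y) / ((u - y) ^ 2 + t ^ 2) + y / (y ^ 2 + 1) =
      (u * y * (u - y) + (u - y) + t ^ 2 * y) / (((u - y) ^ 2 + t ^ 2) * (1 + y ^ 2)) := by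
    field_simp
    ring
  have hy : |y| ≤ |u| + |u - y| := by simpa using abs_sub u (u - y)
  have hnum : |u * y * (u - y) + (u - y) + t ^ 2 * y| ≤
      (u ^ 2 + 1 + t ^ 2) * |u - y| + |u| * ((u - y) ^ 2 + t ^ 2) :=
    calc |u * y * (u - y) + (u - y) + t ^ 2 * y|
        ≤ |u| * |y| * |u - y| + |u - y| + t ^ 2 * |y| := by
          refine (abs_add_le _ _).trans (add_le_add ((abs_add_le _ _).trans_eq ?_) ?_)
          · rw [abs_mul, abs_mul]
          · rw [abs_mul, abs_sq]
      _ ≤ |u| * (|u| + |u - y|) * |u - y| + |u - y| + t ^ 2 * (|u| + |u - y|) := by gcongr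
      _ = (|u| ^ 2 + 1 + t ^ 2) * |u - y| + |u| * (|u - y| ^ 2 + t ^ 2) := by ring
      _ = _ := by rw [sq_abs, sq_abs]
  have hz : 2 * t * |u - y| ≤ (u - y) ^ 2 + t ^ 2 := by
    nlinarith [sq_nonneg (|u - y| - t), sq_abs (u - y)]
  have hD : 0 < ((u - y) ^ 2 + t ^ 2) * (1 + y ^ 2) := by positivity
  rw [hsum, abs_div, abs_of_pos hD, div_le_iff₀ hD, mul_comm ((u - y) ^ 2 + t ^ 2),
    ← mul_assoc, mul_assoc _ _ (1 + y ^ 2), inv_mul_cancel₀ (by positivity), mul_one,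
    div_mul_eq_mul_div, le_div_iff₀ (by positivity)]
  nlinarith [mul_le_mul_of_nonneg_left hz (by positivity : 0 ≤ u ^ 2 + 1 + t ^ 2), sq_abs u]

lemma integral_sub_mul_sq_sub_sq_div {f : ℝ → ℝ} {t : ℝ} (ht : t ≠ 0) (x : ℝ)
    (hf : Integrable fun y => f y * ((t ^ 2 - (x - y) ^ 2) / ((x - y) ^ 2 + t ^ 2) ^ 2)) :
    ∫ y, (f (x - y) - f x) * (t ^ 2 - y ^ 2) / (y ^ 2 + t ^ 2) ^ 2 =
      ∫ y, f y * ((t ^ 2 - (x - y) ^ 2) / ((x - y) ^ 2 + t ^ 2) ^ 2) := by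
  have hshift : Integrable fun y => f (x - y) * ((t ^ 2 - y ^ 2) / (y ^ 2 + t ^ 2) ^ 2) := by
    simpa only [sub_sub_cancel] using hf.comp_sub_left x
  calc ∫ y, (f (x - y) - f x) * (t ^ 2 - y ^ 2) / (y ^ 2 + t ^ 2) ^ 2
      = ∫ y, (f (x - y) * ((t ^ 2 - y ^ 2) / (y ^ 2 + t ^ 2) ^ 2) -
          f x * ((t ^ 2 - y ^ 2) / (y ^ 2 + t ^ 2) ^ 2)) := by
        congr 1 with y
        ring
    _ = ∫ y, f (x - y) * ((t ^ 2 - y ^ 2) / (y ^ 2 + t ^ 2) ^ 2) := by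
        rw [integral_sub hshift ((integrable_sq_sub_sq_div_sq_add_sq_sq ht).const_mul _),
          integral_const_mul, integral_sq_sub_sq_div_sq_add_sq_sq ht, mul_zero, sub_zero]
    _ = ∫ y, f y * ((t ^ 2 - (x - y) ^ 2) / ((x - y) ^ 2 + t ^ 2) ^ 2) := by
        rw [← integral_sub_left_eq_self
          (fun y => f y * ((t ^ 2 - (x - y) ^ 2) / ((x - y) ^ 2 + t ^ 2) ^ 2)) volume x]
        simp only [sub_sub_cancel]

lemma abs_integral_sub_mul_sq_sub_sq_div_le {f : ℝ → ℝ} {α K t x : ℝ} (hα0 : -1 < α)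
    (hα1 : α < 1) (ht : 0 < t) (hf : ∀ y, |f (x - y) - f x| ≤ K * |y| ^ α) :
    |∫ y, (f (x - y) - f x) * (t ^ 2 - y ^ 2) / (y ^ 2 + t ^ 2) ^ 2| ≤
      K * (π * t ^ (α - 1) / cos (π * α / 2)) := by
  have hpointwise (y : ℝ) : ‖(f (x - y) - f x) * (t ^ 2 - y ^ 2) / (y ^ 2 + t ^ 2) ^ 2‖ ≤
      K * (|y| ^ α / (y ^ 2 + t ^ 2)) := by
    calc _ = |f (x - y) - f x| * |(t ^ 2 - y ^ 2) / (y ^ 2 + t ^ 2) ^ 2| := by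
          rw [Real.norm_eq_abs, mul_div_assoc, abs_mul]
      _ ≤ K * |y| ^ α * (1 / (y ^ 2 + t ^ 2)) :=
          mul_le_mul (hf y) (abs_sq_sub_sq_div_sq_add_sq_sq_le t y) (abs_nonneg _)
            ((abs_nonneg _).trans (hf y))
      _ = _ := by ring
  calc _ ≤ ∫ y, K * (|y| ^ α / (y ^ 2 + t ^ 2)) :=
        norm_integral_le_of_norm_le ((integrable_abs_rpow_div_sq_add_sq hα0 hα1 ht).const_mul K)
          (Eventually.of_forall hpointwise)
    _ = _ := by rw [integral_const_mul, integral_abs_rpow_div_sq_add_sq hα0 hα1 ht]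

section WeightedIntegrable

variable {Ω : ℝ → ℝ}

lemma aestronglyMeasurable_of_integrable_div_one_add_sq
    (hΩ : Integrable fun y => Ω y / (1 + y ^ 2)) : AEStronglyMeasurable Ω := by
  have h : Ω = fun y => Ω y / (1 + y ^ 2) * (1 + y ^ 2) := funext fun y => by field_simp
  rw [h]
  exact hΩ.aestronglyMeasurable.mul
    (by fun_prop : Continuous fun y : ℝ => 1 + y ^ 2).aestronglyMeasurable

lemma norm_mul_le_of_abs_le_mul_inv {a b w C : ℝ} (hw : 0 ≤ w) (ha : |a| ≤ C * w⁻¹) :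
    ‖b * a‖ ≤ C * ‖b / w‖ := by
  rw [Real.norm_eq_abs, Real.norm_eq_abs, abs_mul, abs_div, abs_of_nonneg hw]
  calc |b| * |a| ≤ |b| * (C * w⁻¹) := by gcongr
    _ = C * (|b| / w) := by ring

lemma integrable_mul_of_abs_le_mul_inv_one_add_sq {K : ℝ → ℝ} {C : ℝ}
    (hΩ : Integrable fun y => Ω y / (1 + y ^ 2)) (hKm : AEStronglyMeasurable K)
    (hK : ∀ y, |K y| ≤ C * (1 + y ^ 2)⁻¹) : Integrable fun y => Ω y * K y :=
  (hΩ.norm.const_mul C).mono' ((aestronglyMeasurable_of_integrable_div_one_add_sq hΩ).mul hKm)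
    (Eventually.of_forall fun y => norm_mul_le_of_abs_le_mul_inv (by positivity) (hK y))

theorem hasDerivAt_integral_mul_conjPoisson (hΩ : Integrable fun y => Ω y / (1 + y ^ 2))
    {t : ℝ} (ht : 0 < t) (x : ℝ) :
    Integrable (fun y => Ω y * ((t ^ 2 - (x - y) ^ 2) / ((x - y) ^ 2 + t ^ 2) ^ 2)) ∧
    HasDerivAt (fun u => ∫ y, Ω y * ((u - y) / ((u - y) ^ 2 + t ^ 2) + y / (y ^ 2 + 1)))
      (∫ y, Ω y * ((t ^ 2 - (x - y) ^ 2) / ((x - y) ^ 2 + t ^ 2) ^ 2)) x := by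
  have hΩm := aestronglyMeasurable_of_integrable_div_one_add_sq hΩ
  have hkernel (u : ℝ) :
      Continuous fun y : ℝ => (u - y) / ((u - y) ^ 2 + t ^ 2) + y / (y ^ 2 + 1) :=
    (Continuous.div (by fun_prop) (by fun_prop) fun y => by positivity).add
      (Continuous.div (by fun_prop) (by fun_prop) fun y => by positivity)
  have hkernel_deriv :
      Continuous fun y : ℝ => (t ^ 2 - (x - y) ^ 2) / ((x - y) ^ 2 + t ^ 2) ^ 2 :=
    Continuous.div (by fun_prop) (by fun_prop) fun y => by positivity
  have hball {u : ℝ} (hu : u ∈ Metric.ball x 1) : |u| ≤ |x| + 1 := by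
    have := abs_sub_abs_le_abs_sub u x
    rw [Metric.mem_ball, Real.dist_eq] at hu
    linarith
  refine hasDerivAt_integral_of_dominated_loc_of_deriv_le
    (F' := fun u y => Ω y * ((t ^ 2 - (u - y) ^ 2) / ((u - y) ^ 2 + t ^ 2) ^ 2))
    (bound := fun y => ((1 + 2 * (|x| + 1) ^ 2) / t ^ 2 + 2) * ‖Ω y / (1 + y ^ 2)‖)
    (Metric.ball_mem_nhds x one_pos)
    (Eventually.of_forall fun u => hΩm.mul (hkernel u).aestronglyMeasurable)
    (integrable_mul_of_abs_le_mul_inv_one_add_sq hΩ (hkernel x).aestronglyMeasurable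
      (abs_sub_div_sq_add_sq_add_div_sq_add_one_le ht x))
    (hΩm.mul hkernel_deriv.aestronglyMeasurable) ?_ (hΩ.norm.const_mul _) ?_
  · refine Eventually.of_forall fun y u hu => norm_mul_le_of_abs_le_mul_inv (by positivity) ?_
    exact (abs_sq_sub_sq_div_sq_add_sq_sq_le t (u - y)).trans
      (one_div_sub_sq_add_sq_le ht.ne' (hball hu) y)
  · refine Eventually.of_forall fun y u _ => ?_
    have h := (hasDerivAt_div_sq_add_sq ht.ne' (u - y)).comp u ((hasDerivAt_id' u).sub_const y)
    rw [mul_one] at h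
    exact (h.add_const _).const_mul (Ω y)

end WeightedIntegrable

theorem modified_conjPoisson_deriv_of_holder_general
    (Ω : ℝ → ℝ) (α K₀ : ℝ) (hα0 : 0 < α) (hα1 : α < 1)
    (hHolder : ∀ x y : ℝ, |Ω x - Ω y| ≤ K₀ * |x - y| ^ α)
    (hint : Integrable (fun x => Ω x / (1 + x ^ 2)))
    (t : ℝ) (ht : 0 < t) (x : ℝ) :
    HasDerivAt (fun u : ℝ => (1 / π) * ∫ y : ℝ,
        Ω y * ((u - y) / ((u - y) ^ 2 + t ^ 2) + y / (y ^ 2 + 1)))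
      ((1 / π) * ∫ y : ℝ, (Ω (x - y) - Ω x) * (t ^ 2 - y ^ 2) / (y ^ 2 + t ^ 2) ^ 2) x ∧
    |(1 / π) * ∫ y : ℝ, (Ω (x - y) - Ω x) * (t ^ 2 - y ^ 2) / (y ^ 2 + t ^ 2) ^ 2| ≤
      K₀ * t ^ (α - 1) / Real.cos (π * α / 2) := by
  obtain ⟨hint_deriv, hderiv⟩ := hasDerivAt_integral_mul_conjPoisson hint ht x
  rw [← integral_sub_mul_sq_sub_sq_div ht.ne' x hint_deriv] at hderiv
  refine ⟨hderiv.const_mul (1 / π), ?_⟩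
  have hHolder_at (y : ℝ) : |Ω (x - y) - Ω x| ≤ K₀ * |y| ^ α := by
    simpa [abs_sub_comm y] using hHolder (x - y) x
  calc |(1 / π) * ∫ y : ℝ, (Ω (x - y) - Ω x) * (t ^ 2 - y ^ 2) / (y ^ 2 + t ^ 2) ^ 2|
      = (1 / π) * |∫ y : ℝ, (Ω (x - y) - Ω x) * (t ^ 2 - y ^ 2) / (y ^ 2 + t ^ 2) ^ 2| := by
        rw [abs_mul, abs_of_pos (by positivity)]
    _ ≤ (1 / π) * (K₀ * (π * t ^ (α - 1) / cos (π * α / 2))) := by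
        gcongr
        exact abs_integral_sub_mul_sq_sub_sq_div_le (by linarith) hα1 ht hHolder_at
    _ = K₀ * t ^ (α - 1) / Real.cos (π * α / 2) := by field_simp

/-- For a Hölder continuous `Ω`, the modified conjugate Poisson transform `Q̃_tΩ` is
differentiable, its derivative is `(1/π)∫ (Ω(x-y)-Ω(x))(t²-y²)/(y²+t²)² dy`, and it
is bounded by `K₀ t^{α-1} / cos(πα/2)`. -/
theorem modified_conjPoisson_deriv_of_holder
    (Ω : ℝ → ℝ) (α K₀ : ℝ) (hα0 : 0 < α) (hα1 : α < 1) (hK : 0 < K₀)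
    (hHolder : ∀ x y : ℝ, |Ω x - Ω y| ≤ K₀ * |x - y| ^ α)
    (hint : Integrable (fun x => Ω x / (1 + x ^ 2)))
    (t : ℝ) (ht : 0 < t) (x : ℝ) :
    HasDerivAt (fun u : ℝ => (1 / π) * ∫ y : ℝ,
        Ω y * ((u - y) / ((u - y) ^ 2 + t ^ 2) + y / (y ^ 2 + 1)))
      ((1 / π) * ∫ y : ℝ, (Ω (x - y) - Ω x) * (t ^ 2 - y ^ 2) / (y ^ 2 + t ^ 2) ^ 2) x ∧
    |(1 / π) * ∫ y : ℝ, (Ω (x - y) - Ω x) * (t ^ 2 - y ^ 2) / (y ^ 2 + t ^ 2) ^ 2| ≤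
      K₀ * t ^ (α - 1) / Real.cos (π * α / 2) :=
  modified_conjPoisson_deriv_of_holder_general Ω α K₀ hα0 hα1 hHolder hint t ht x
end

section
/- Let Ω(x) = √(2πx) for x > 0 and Ω(x) = 0 for x ≤ 0. Then for every t > 0 and every x ∈ ℝ, the Poisson transform of Ω is given explicitly by P_t Ω(x) = (1/π) ∫₀^∞ t √(2πy) / (t² + (x−y)²) dy = √(π(√(x²+t²) + x)). -/
open MeasureTheory Real Set Filter Topology

/-!
Write `x + i t = (a + i b)²` with `a, b > 0`. After the substitution `y = u²` the kernel becomes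
`4 a b u² / (((u - a)² + b²) ((u + a)² + b²))`, since `t² + (x - u²)²` factors this way; partial
fractions give a primitive built from `log` and `arctan` that is odd and tends to `π a / b`, so the
integral equals `π √(2π) a`, and `π (√(x² + t²) + x) = 2 π a²`.
-/

noncomputable def sqrtKernelPrimitive (a b u : ℝ) : ℝ :=
  (log ((u - a) ^ 2 + b ^ 2) - log ((u + a) ^ 2 + b ^ 2)) / 2 +
    a / b * (arctan ((u - a) / b) + arctan ((u + a) / b))

lemma sqrtKernelPrimitive_zero (a b : ℝ) : sqrtKernelPrimitive a b 0 = 0 := by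
  simp only [sqrtKernelPrimitive, zero_sub, zero_add, neg_sq, neg_div, arctan_neg]
  ring

lemma hasDerivAt_sqrtKernelPrimitive (a : ℝ) {b : ℝ} (hb : b ≠ 0) (u : ℝ) :
    HasDerivAt (sqrtKernelPrimitive a b)
      (4 * a * u ^ 2 / (((u - a) ^ 2 + b ^ 2) * ((u + a) ^ 2 + b ^ 2))) u := by
  have hlog (c : ℝ) : HasDerivAt (fun v => log ((v + c) ^ 2 + b ^ 2))
      (2 * (u + c) / ((u + c) ^ 2 + b ^ 2)) u := by
    have hpos : (u + c) ^ 2 + b ^ 2 ≠ 0 := by positivity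
    simpa using ((((hasDerivAt_id u).add_const c).pow 2).add_const (b ^ 2)).log hpos
  have harctan (c : ℝ) : HasDerivAt (fun v => arctan ((v + c) / b))
      (1 / (1 + ((u + c) / b) ^ 2) * (1 / b)) u :=
    (((hasDerivAt_id u).add_const c).div_const b).arctan
  have hA : (u - a) ^ 2 + b ^ 2 ≠ 0 := by positivity
  have hB : (u + a) ^ 2 + b ^ 2 ≠ 0 := by positivity
  have := (((hlog (-a)).sub (hlog a)).div_const 2).add
    (((harctan (-a)).add (harctan a)).const_mul (a / b))
  simp only [← sub_eq_add_neg] at this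
  refine this.congr_deriv ?_
  field_simp
  ring

lemma tendsto_log_sq_add_sub_log_sq_add_atTop (a c : ℝ) (hc : 0 < c) :
    Tendsto (fun u => log ((u - a) ^ 2 + c) - log ((u + a) ^ 2 + c)) atTop (𝓝 0) := by
  have hratio : Tendsto (fun u => ((u - a) ^ 2 + c) / ((u + a) ^ 2 + c)) atTop (𝓝 1) := by
    have h1 : Tendsto (fun u : ℝ => a / u) atTop (𝓝 0) := tendsto_const_nhds.div_atTop tendsto_id
    have h2 : Tendsto (fun u : ℝ => c / u ^ 2) atTop (𝓝 0) :=
      tendsto_const_nhds.div_atTop (tendsto_pow_atTop two_ne_zero)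
    have h0 : Tendsto (fun _ : ℝ => (1 : ℝ)) atTop (𝓝 1) := tendsto_const_nhds
    have := (((h0.sub h1).pow 2).add h2).div (((h0.add h1).pow 2).add h2) (by norm_num)
    rw [show ((1 : ℝ) - 0) ^ 2 + 0 = 1 by norm_num, show ((1 : ℝ) + 0) ^ 2 + 0 = 1 by norm_num,
      div_one] at this
    refine this.congr' ?_
    filter_upwards [eventually_ne_atTop 0] with u hu
    have : (u + a) ^ 2 + c ≠ 0 := by positivity
    simp only [Pi.div_apply]
    field_simp
  have hlog1 : Tendsto log (𝓝 1) (𝓝 0) := by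
    simpa using (continuousAt_log one_ne_zero).tendsto
  refine (hlog1.comp hratio).congr fun u => ?_
  exact log_div (by positivity) (by positivity)

lemma tendsto_sqrtKernelPrimitive_atTop (a : ℝ) {b : ℝ} (hb : 0 < b) :
    Tendsto (sqrtKernelPrimitive a b) atTop (𝓝 (π * a / b)) := by
  have harctan (c : ℝ) : Tendsto (fun u => arctan ((u + c) / b)) atTop (𝓝 (π / 2)) :=
    tendsto_nhds_of_tendsto_nhdsWithin tendsto_arctan_atTop |>.comp
      ((tendsto_atTop_add_const_right atTop c tendsto_id).atTop_div_const hb)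
  have := ((tendsto_log_sq_add_sub_log_sq_add_atTop a (b ^ 2) (by positivity)).div_const 2).add
    (((harctan (-a)).add (harctan a)).const_mul (a / b))
  simp only [← sub_eq_add_neg] at this
  rw [show π * a / b = 0 / 2 + a / b * (π / 2 + π / 2) by ring]
  exact this

lemma hasDerivAt_sqrtKernelPrimitive_sqrt (a : ℝ) {b y : ℝ} (hb : b ≠ 0) (hy : 0 < y) :
    HasDerivAt (fun y => sqrtKernelPrimitive a b √y)
      (2 * a * √y / ((2 * a * b) ^ 2 + (a ^ 2 - b ^ 2 - y) ^ 2)) y := by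
  refine ((hasDerivAt_sqrtKernelPrimitive a hb √y).comp y (hasDerivAt_sqrt hy.ne')).congr_deriv ?_
  have hsqrt : √y ^ 2 = y := sq_sqrt hy.le
  have hfactor : ((√y - a) ^ 2 + b ^ 2) * ((√y + a) ^ 2 + b ^ 2)
      = (2 * a * b) ^ 2 + (a ^ 2 - b ^ 2 - y) ^ 2 := by
    linear_combination (√y ^ 2 + y - 2 * a ^ 2 + 2 * b ^ 2) * hsqrt
  have : 0 < √y := sqrt_pos.2 hy
  rw [hfactor]
  field_simp
  ring

lemma integral_Ioi_sqrt_div_quartic {a b : ℝ} (ha : 0 ≤ a) (hb : 0 < b) :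
    ∫ y in Ioi 0, 2 * a * √y / ((2 * a * b) ^ 2 + (a ^ 2 - b ^ 2 - y) ^ 2) = π * a / b := by
  have hcont : Continuous fun y => sqrtKernelPrimitive a b √y := by
    refine continuous_iff_continuousAt.2 fun y => ?_
    exact (hasDerivAt_sqrtKernelPrimitive a hb.ne' _).continuousAt.comp continuous_sqrt.continuousAt
  rw [integral_Ioi_of_hasDerivAt_of_nonneg hcont.continuousWithinAt
    (fun y hy => hasDerivAt_sqrtKernelPrimitive_sqrt a hb.ne' hy) (fun y _ => by positivity)
    ((tendsto_sqrtKernelPrimitive_atTop a hb).comp tendsto_sqrt_atTop)]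
  simp [sqrtKernelPrimitive_zero]

lemma exists_sq_sub_sq_eq_and_two_mul_eq (x : ℝ) {t : ℝ} (ht : 0 < t) :
    ∃ a b : ℝ, 0 < a ∧ 0 < b ∧ a ^ 2 - b ^ 2 = x ∧ 2 * a * b = t := by
  have hr : |x| < √(x ^ 2 + t ^ 2) := by
    rw [← sqrt_sq_eq_abs]; exact sqrt_lt_sqrt (sq_nonneg x) (lt_add_of_pos_right _ (by positivity))
  have hrx : 0 < √(x ^ 2 + t ^ 2) + x := by linarith [neg_abs_le x]
  set a := √((√(x ^ 2 + t ^ 2) + x) / 2)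
  have ha : 0 < a := sqrt_pos.2 (by positivity)
  have ha2 : a ^ 2 = (√(x ^ 2 + t ^ 2) + x) / 2 := sq_sqrt (by positivity)
  refine ⟨a, t / (2 * a), ha, by positivity, ?_, by field_simp⟩
  have hr2 : √(x ^ 2 + t ^ 2) ^ 2 = x ^ 2 + t ^ 2 := sq_sqrt (by positivity)
  field_simp
  linear_combination (4 * a ^ 2 + 2 * √(x ^ 2 + t ^ 2) - 2 * x) * ha2 + hr2

lemma integral_Ioi_poisson_sqrt {a b : ℝ} (ha : 0 ≤ a) (hb : 0 < b) :
    ∫ y in Ioi 0, 2 * a * b * √(2 * π * y) / ((2 * a * b) ^ 2 + (a ^ 2 - b ^ 2 - y) ^ 2)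
      = π * (√(2 * π) * a) := by
  have hintegrand (y : ℝ) : 2 * a * b * √(2 * π * y) / ((2 * a * b) ^ 2 + (a ^ 2 - b ^ 2 - y) ^ 2)
      = b * √(2 * π) * (2 * a * √y / ((2 * a * b) ^ 2 + (a ^ 2 - b ^ 2 - y) ^ 2)) := by
    rw [sqrt_mul (by positivity)]; ring
  simp_rw [hintegrand]
  rw [integral_const_mul, integral_Ioi_sqrt_div_quartic ha hb]
  field_simp

/-- Explicit Poisson extension of `Ω(x) = √(2πx)·1_{x>0}`:
`P_tΩ(x) = (1/π)∫₀^∞ t√(2πy)/(t²+(x-y)²) dy = √(π(√(x²+t²)+x))`. -/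
theorem poisson_of_sqrt_weight
    (Ω : ℝ → ℝ) (hΩ : ∀ y, Ω y = if 0 < y then Real.sqrt (2 * π * y) else 0)
    (t : ℝ) (ht : 0 < t) (x : ℝ) :
    (∫ y : ℝ, t * Ω y / (π * (t ^ 2 + (x - y) ^ 2)))
        = (1 / π) * ∫ y in Ioi (0 : ℝ), t * Real.sqrt (2 * π * y) / (t ^ 2 + (x - y) ^ 2) ∧
    (∫ y : ℝ, t * Ω y / (π * (t ^ 2 + (x - y) ^ 2)))
        = Real.sqrt (π * (Real.sqrt (x ^ 2 + t ^ 2) + x)) := by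
  have hkernel (y : ℝ) : t * Ω y / (π * (t ^ 2 + (x - y) ^ 2))
      = (Ioi 0).indicator (fun y => π⁻¹ * (t * √(2 * π * y) / (t ^ 2 + (x - y) ^ 2))) y := by
    by_cases hy : 0 < y
    · rw [hΩ, if_pos hy, indicator_of_mem (mem_Ioi.2 hy)]; field_simp
    · rw [hΩ, if_neg hy, indicator_of_notMem (notMem_Ioi.2 (not_lt.1 hy))]; simp
  have hIoi : (∫ y : ℝ, t * Ω y / (π * (t ^ 2 + (x - y) ^ 2)))
      = (1 / π) * ∫ y in Ioi 0, t * √(2 * π * y) / (t ^ 2 + (x - y) ^ 2) := by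
    simp_rw [hkernel]
    rw [integral_indicator measurableSet_Ioi, integral_const_mul, one_div]
  refine ⟨hIoi, ?_⟩
  obtain ⟨a, b, ha, hb, rfl, rfl⟩ := exists_sq_sub_sq_eq_and_two_mul_eq x ht
  have hmodulus : √((a ^ 2 - b ^ 2) ^ 2 + (2 * a * b) ^ 2) = a ^ 2 + b ^ 2 := by
    rw [show (a ^ 2 - b ^ 2) ^ 2 + (2 * a * b) ^ 2 = (a ^ 2 + b ^ 2) ^ 2 by ring]
    exact sqrt_sq (by positivity)
  rw [hIoi, integral_Ioi_poisson_sqrt ha.le hb, hmodulus,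
    show π * (a ^ 2 + b ^ 2 + (a ^ 2 - b ^ 2)) = (√(2 * π) * a) ^ 2 by
      rw [mul_pow, sq_sqrt (by positivity)]; ring,
    sqrt_sq (by positivity)]
  field_simp
end

section
/- Let Ω(x) = √(2πx) for x > 0 and Ω(x) = 0 for x ≤ 0. Then for every t > 0 and every x ∈ ℝ, the modified conjugate Poisson transform of Ω is given explicitly by Q̃_t Ω(x) = (1/π) ∫₀^∞ √(2πy) ((x−y)/((x−y)²+t²) + y/(y²+1)) dy = −√π + √(π(√(x²+t²) − x)). -/
/-!
Substituting `y = u²` turns the integral into `√(2π) ∫₀^∞ (k_{0,1} - k_{x,t})`, where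
`k_{p,q}(u) = (2pu² - 2(p² + q²)) / ((u² - p)² + q²)`: the first summand of the kernel gives
`2u² (x - u²) / ((x - u²)² + t²) = -2 - k_{x,t}(u)` and the second one the compensating
`2 + k_{0,1}(u)`, so that what remains is `O(u⁻²)`. Writing `p + iq = (a + ib)²` with `a, b > 0`,
the denominator factors as `((u - a)² + b²)((u + a)² + b²)`, and partial fractions give an
arctan/log primitive of `k_{p,q}` which vanishes at `0` and tends to `-πb` at `∞`; hence
`∫₀^∞ k_{p,q} = -π √((√(p² + q²) - p) / 2)`.
-/

open MeasureTheory Real Set Filter Topology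

noncomputable def quarticKernel (p q u : ℝ) : ℝ :=
  (2 * p * u ^ 2 - 2 * (p ^ 2 + q ^ 2)) / ((u ^ 2 - p) ^ 2 + q ^ 2)

noncomputable def quarticKernelPrimitive (a b u : ℝ) : ℝ :=
  -b * (arctan ((u - a) / b) + arctan ((u + a) / b))
    + a / 2 * (log ((u - a) ^ 2 + b ^ 2) - log ((u + a) ^ 2 + b ^ 2))

lemma hasDerivAt_arctan_add_div (c b u : ℝ) :
    HasDerivAt (fun u => arctan ((u + c) / b)) (1 / (1 + ((u + c) / b) ^ 2) * (1 / b)) u :=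
  (hasDerivAt_arctan _).comp u (((hasDerivAt_id u).add_const c).div_const b)

lemma hasDerivAt_log_add_sq_add_sq (c u : ℝ) {b : ℝ} (hb : b ≠ 0) :
    HasDerivAt (fun u => log ((u + c) ^ 2 + b ^ 2)) (2 * (u + c) / ((u + c) ^ 2 + b ^ 2)) u := by
  have h : HasDerivAt (fun u => (u + c) ^ 2 + b ^ 2) (2 * (u + c)) u := by
    simpa using (((hasDerivAt_id u).add_const c).pow 2).add_const (b ^ 2)
  exact h.log (by positivity)

lemma hasDerivAt_quarticKernelPrimitive (a : ℝ) {b : ℝ} (hb : b ≠ 0) (u : ℝ) :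
    HasDerivAt (quarticKernelPrimitive a b) (quarticKernel (a ^ 2 - b ^ 2) (2 * a * b) u) u := by
  have harctan := (hasDerivAt_arctan_add_div (-a) b u).add (hasDerivAt_arctan_add_div a b u)
  have hlog := (hasDerivAt_log_add_sq_add_sq (-a) u hb).sub (hasDerivAt_log_add_sq_add_sq a u hb)
  have h := (harctan.const_mul (-b)).add (hlog.const_mul (a / 2))
  simp only [← sub_eq_add_neg] at h
  refine h.congr_deriv ?_
  have h₁ : (u - a) ^ 2 + b ^ 2 ≠ 0 := by positivity
  have h₂ : (u + a) ^ 2 + b ^ 2 ≠ 0 := by positivity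
  have hfactor : (u ^ 2 - (a ^ 2 - b ^ 2)) ^ 2 + (2 * a * b) ^ 2
      = ((u - a) ^ 2 + b ^ 2) * ((u + a) ^ 2 + b ^ 2) := by ring
  rw [quarticKernel, hfactor]
  field_simp
  ring

lemma quarticKernelPrimitive_zero (a b : ℝ) : quarticKernelPrimitive a b 0 = 0 := by
  simp only [quarticKernelPrimitive, zero_sub, zero_add, neg_div, arctan_neg, neg_sq]
  ring

lemma tendsto_log_sub_log_atTop (a : ℝ) {b : ℝ} (hb : b ≠ 0) :
    Tendsto (fun u => log ((u - a) ^ 2 + b ^ 2) - log ((u + a) ^ 2 + b ^ 2)) atTop (𝓝 0) := by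
  set g : ℝ → ℝ := fun s =>
    log ((1 + -a * s) ^ 2 + (b * s) ^ 2) - log ((1 + a * s) ^ 2 + (b * s) ^ 2)
  have hg : ContinuousAt g 0 := by fun_prop (disch := norm_num)
  have h := hg.tendsto.comp tendsto_inv_atTop_zero
  simp only [g, mul_zero, add_zero, sub_self, Function.comp_def] at h
  refine h.congr' ?_
  filter_upwards [eventually_gt_atTop 0] with u hu
  have hlog (c : ℝ) : log ((u + c) ^ 2 + b ^ 2)
      = log (u ^ 2) + log ((1 + c * u⁻¹) ^ 2 + (b * u⁻¹) ^ 2) := by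
    rw [← log_mul (by positivity) (by positivity)]
    congr 1
    field_simp
  rw [sub_eq_add_neg u a, hlog, hlog]
  ring

lemma tendsto_quarticKernelPrimitive_atTop (a : ℝ) {b : ℝ} (hb : 0 < b) :
    Tendsto (quarticKernelPrimitive a b) atTop (𝓝 (-(π * b))) := by
  have harctan (c : ℝ) : Tendsto (fun u => arctan ((u + c) / b)) atTop (𝓝 (π / 2)) :=
    (tendsto_arctan_atTop.mono_right nhdsWithin_le_nhds).comp
      ((tendsto_atTop_add_const_right _ c tendsto_id).atTop_div_const hb)
  have h := (((harctan (-a)).add (harctan a)).const_mul (-b)).add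
    ((tendsto_log_sub_log_atTop a hb.ne').const_mul (a / 2))
  simp only [← sub_eq_add_neg] at h
  have hlim : -b * (π / 2 + π / 2) + a / 2 * 0 = -(π * b) := by ring
  rwa [hlim] at h

lemma sq_one_add_sq_le (p u : ℝ) {q : ℝ} (hq : q ≠ 0) :
    (1 + u ^ 2) ^ 2 ≤ (2 * (1 + |p|) ^ 2 / q ^ 2 + 2) * ((u ^ 2 - p) ^ 2 + q ^ 2) := by
  have hle : 1 + u ^ 2 ≤ (1 + |p|) + |u ^ 2 - p| := by
    linarith [le_abs_self (u ^ 2 - p), le_abs_self p]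
  have hsq : (1 + u ^ 2) ^ 2 ≤ 2 * (1 + |p|) ^ 2 + 2 * (u ^ 2 - p) ^ 2 := by
    nlinarith [pow_le_pow_left₀ (by positivity) hle 2, sq_nonneg ((1 + |p|) - |u ^ 2 - p|),
      sq_abs (u ^ 2 - p)]
  have hexpand : (2 * (1 + |p|) ^ 2 / q ^ 2 + 2) * ((u ^ 2 - p) ^ 2 + q ^ 2)
      = 2 * (1 + |p|) ^ 2 / q ^ 2 * (u ^ 2 - p) ^ 2 + 2 * (1 + |p|) ^ 2
        + 2 * ((u ^ 2 - p) ^ 2 + q ^ 2) := by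
    field_simp
  rw [hexpand]
  nlinarith [mul_nonneg (by positivity : 0 ≤ 2 * (1 + |p|) ^ 2 / q ^ 2) (sq_nonneg (u ^ 2 - p)),
    sq_nonneg q]

lemma exists_abs_quarticKernel_le (p : ℝ) {q : ℝ} (hq : q ≠ 0) :
    ∃ C, ∀ u, |quarticKernel p q u| ≤ C * (1 + u ^ 2)⁻¹ := by
  set A := 2 * |p| + 2 * (p ^ 2 + q ^ 2)
  refine ⟨A * (2 * (1 + |p|) ^ 2 / q ^ 2 + 2), fun u => ?_⟩
  have hnum : |2 * p * u ^ 2 - 2 * (p ^ 2 + q ^ 2)| ≤ A * (1 + u ^ 2) := by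
    calc |2 * p * u ^ 2 - 2 * (p ^ 2 + q ^ 2)|
        ≤ |2 * p * u ^ 2| + |2 * (p ^ 2 + q ^ 2)| := abs_sub _ _
      _ = 2 * |p| * u ^ 2 + 2 * (p ^ 2 + q ^ 2) := by
        rw [abs_mul, abs_mul, abs_of_nonneg (sq_nonneg u),
          abs_of_nonneg (by positivity : (0 : ℝ) ≤ 2 * (p ^ 2 + q ^ 2))]
        norm_num
      _ ≤ A * (1 + u ^ 2) := by nlinarith [abs_nonneg p, sq_nonneg u]
  have hD : 0 < (u ^ 2 - p) ^ 2 + q ^ 2 := by positivity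
  rw [quarticKernel, abs_div, abs_of_pos hD, ← div_eq_mul_inv,
    div_le_div_iff₀ hD (by positivity)]
  calc |2 * p * u ^ 2 - 2 * (p ^ 2 + q ^ 2)| * (1 + u ^ 2) ≤ A * (1 + u ^ 2) ^ 2 := by
        nlinarith [mul_le_mul_of_nonneg_right hnum (by positivity : (0 : ℝ) ≤ 1 + u ^ 2)]
    _ ≤ _ := by
        rw [mul_assoc]
        exact mul_le_mul_of_nonneg_left (sq_one_add_sq_le p u hq) (by positivity)

lemma integrable_quarticKernel (p : ℝ) {q : ℝ} (hq : q ≠ 0) :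
    Integrable (quarticKernel p q) := by
  obtain ⟨C, hC⟩ := exists_abs_quarticKernel_le p hq
  have hcont : Continuous (quarticKernel p q) :=
    Continuous.div (by fun_prop) (by fun_prop) fun u => by positivity
  exact (integrable_inv_one_add_sq.const_mul C).mono' hcont.aestronglyMeasurable
    (ae_of_all _ hC)

lemma integral_Ioi_quarticKernel_sq_sub_sq {a b : ℝ} (ha : 0 < a) (hb : 0 < b) :
    ∫ u in Ioi 0, quarticKernel (a ^ 2 - b ^ 2) (2 * a * b) u = -(π * b) := by
  rw [integral_Ioi_of_hasDerivAt_of_tendsto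
    (hasDerivAt_quarticKernelPrimitive a hb.ne' 0).continuousAt.continuousWithinAt
    (fun u _ => hasDerivAt_quarticKernelPrimitive a hb.ne' u)
    (integrable_quarticKernel _ (by positivity)).integrableOn
    (tendsto_quarticKernelPrimitive_atTop a hb), quarticKernelPrimitive_zero, sub_zero]

lemma integral_Ioi_quarticKernel (p : ℝ) {q : ℝ} (hq : 0 < q) :
    ∫ u in Ioi 0, quarticKernel p q u = -(π * √((√(p ^ 2 + q ^ 2) - p) / 2)) := by
  set r := √(p ^ 2 + q ^ 2)
  have hr : |p| < r := by
    rw [← sqrt_sq_eq_abs]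
    exact sqrt_lt_sqrt (sq_nonneg p) (by nlinarith)
  obtain ⟨hrp, hrm⟩ : 0 < r + p ∧ 0 < r - p := by
    constructor <;> linarith [neg_abs_le p, le_abs_self p]
  set a := √((r + p) / 2)
  set b := √((r - p) / 2)
  have ha2 : a ^ 2 = (r + p) / 2 := sq_sqrt (by positivity)
  have hb2 : b ^ 2 = (r - p) / 2 := sq_sqrt (by positivity)
  have hp : a ^ 2 - b ^ 2 = p := by rw [ha2, hb2]; ring
  have hq' : 2 * a * b = q := by
    have hr2 : r ^ 2 = p ^ 2 + q ^ 2 := sq_sqrt (by positivity)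
    have hsq : (2 * a * b) ^ 2 = q ^ 2 := by
      rw [mul_pow, mul_pow, ha2, hb2]; nlinarith
    exact (pow_left_inj₀ (by positivity) hq.le two_ne_zero).mp hsq
  rw [← hp, ← hq']
  exact integral_Ioi_quarticKernel_sq_sub_sq (sqrt_pos.mpr (by positivity))
    (sqrt_pos.mpr (by positivity))

lemma quarticKernel_sub_quarticKernel (x : ℝ) {t : ℝ} (ht : t ≠ 0) (u : ℝ) :
    quarticKernel 0 1 u - quarticKernel x t u
      = 2 * u ^ 2 * ((x - u ^ 2) / ((x - u ^ 2) ^ 2 + t ^ 2) + u ^ 2 / ((u ^ 2) ^ 2 + 1)) := by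
  have h₁ : (x - u ^ 2) ^ 2 + t ^ 2 ≠ 0 := by positivity
  have h₂ : (u ^ 2 - x) ^ 2 + t ^ 2 ≠ 0 := by positivity
  simp only [quarticKernel]
  field_simp
  ring

lemma integral_Ioi_sqrt_mul_modConjPoissonKernel (x : ℝ) {t : ℝ} (ht : 0 < t) :
    ∫ y in Ioi 0, √(2 * π * y) * ((x - y) / ((x - y) ^ 2 + t ^ 2) + y / (y ^ 2 + 1))
      = π * (-√π + √(π * (√(x ^ 2 + t ^ 2) - x))) := by
  rw [← integral_comp_rpow_Ioi _ two_ne_zero]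
  have hsubst : ∀ u ∈ Ioi (0 : ℝ),
      (|(2 : ℝ)| * u ^ ((2 : ℝ) - 1)) • (√(2 * π * u ^ (2 : ℝ)) * ((x - u ^ (2 : ℝ)) /
        ((x - u ^ (2 : ℝ)) ^ 2 + t ^ 2) + u ^ (2 : ℝ) / ((u ^ (2 : ℝ)) ^ 2 + 1)))
      = √(2 * π) * (quarticKernel 0 1 u - quarticKernel x t u) := by
    intro u hu
    have hsqrt : √(2 * π * u ^ 2) = √(2 * π) * u := by
      rw [sqrt_mul (by positivity), sqrt_sq (le_of_lt hu)]
    norm_num [rpow_two, hsqrt, quarticKernel_sub_quarticKernel x ht.ne']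
    ring
  rw [setIntegral_congr_fun measurableSet_Ioi hsubst, integral_const_mul,
    integral_sub (integrable_quarticKernel 0 one_ne_zero).integrableOn
      (integrable_quarticKernel x ht.ne').integrableOn,
    integral_Ioi_quarticKernel 0 one_pos, integral_Ioi_quarticKernel x ht]
  have hmul (s : ℝ) : √(2 * π) * √(s / 2) = √(π * s) := by
    rw [← sqrt_mul (by positivity)]; ring_nf
  have hone : √((√(0 ^ 2 + 1 ^ 2) - 0) / 2) = √(1 / 2) := by norm_num
  have hπ : √(2 * π) * √(1 / 2) = √π := by rw [hmul, mul_one]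
  rw [hone]
  linear_combination π * hmul (√(x ^ 2 + t ^ 2) - x) - π * hπ

/-- Explicit modified conjugate Poisson transform of `Ω(x) = √(2πx)·1_{x>0}`:
`Q̃_tΩ(x) = (1/π)∫₀^∞ √(2πy)((x-y)/((x-y)²+t²) + y/(y²+1)) dy
         = -√π + √(π(√(x²+t²)-x))`. -/
theorem modified_conjPoisson_of_sqrt_weight
    (Ω : ℝ → ℝ) (hΩ : ∀ y, Ω y = if 0 < y then Real.sqrt (2 * π * y) else 0)
    (t : ℝ) (ht : 0 < t) (x : ℝ) :
    ((1 / π) * ∫ y : ℝ, Ω y * ((x - y) / ((x - y) ^ 2 + t ^ 2) + y / (y ^ 2 + 1)))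
        = (1 / π) * ∫ y in Ioi (0 : ℝ),
            Real.sqrt (2 * π * y) * ((x - y) / ((x - y) ^ 2 + t ^ 2) + y / (y ^ 2 + 1)) ∧
    ((1 / π) * ∫ y : ℝ, Ω y * ((x - y) / ((x - y) ^ 2 + t ^ 2) + y / (y ^ 2 + 1)))
        = -Real.sqrt π + Real.sqrt (π * (Real.sqrt (x ^ 2 + t ^ 2) - x)) := by
  have hΩ_indicator : (fun y => Ω y * ((x - y) / ((x - y) ^ 2 + t ^ 2) + y / (y ^ 2 + 1)))
      = (Ioi 0).indicator fun y =>
          √(2 * π * y) * ((x - y) / ((x - y) ^ 2 + t ^ 2) + y / (y ^ 2 + 1)) := by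
    ext y
    by_cases hy : 0 < y <;> simp [hΩ, hy]
  have hrestrict : ∫ y, Ω y * ((x - y) / ((x - y) ^ 2 + t ^ 2) + y / (y ^ 2 + 1))
      = ∫ y in Ioi 0, √(2 * π * y) * ((x - y) / ((x - y) ^ 2 + t ^ 2) + y / (y ^ 2 + 1)) := by
    rw [hΩ_indicator, integral_indicator measurableSet_Ioi]
  refine ⟨by rw [hrestrict], ?_⟩
  rw [hrestrict, integral_Ioi_sqrt_mul_modConjPoissonKernel x ht, ← mul_assoc, one_div,
    inv_mul_cancel₀ pi_ne_zero, one_mul]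
end

section
/- For every t > 0, the function x ↦ √(π(√(t²+x²) − x)) / (2√(t²+x²)) on ℝ attains its supremum at x = −t/√3, and sup_{x∈ℝ} √(π(√(t²+x²) − x)) / (2√(t²+x²)) = √π · 3^{3/4} / (4√t). -/
/-!
Write `r = √(t² + x²)` and `u = r - x > 0`. Then `2 u r = u² + t²`, so the square of the function
is `π/4 · u / r² = π u³ / (u² + t²)²`, and the bound is AM-GM for `u²/3, u²/3, u²/3, t²`:
`16 t u³ ≤ 3√3 (u² + t²)²`, with equality exactly at `u = √3 t`, i.e. at `x = -t/√3`.
-/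

open Real

lemma sqrt_mul_div_two_mul_sqrt (a b : ℝ) {q : ℝ} (hq : 0 ≤ q) :
    √(a * b) / (2 * √q) = √(a / 4 * (b / q)) := by
  rw [show a / 4 * (b / q) = a * b / (4 * q) by ring, sqrt_div' _ (by positivity),
    sqrt_mul' _ hq, show (4 : ℝ) = 2 ^ 2 by norm_num, sqrt_sq zero_le_two]

lemma sqrt_three_mul_sqrt_three_eq_rpow : √(3 * √3) = (3 : ℝ) ^ ((3 : ℝ) / 4) := by
  rw [sqrt_eq_rpow, sqrt_eq_rpow, ← rpow_one_add' (by norm_num) (by norm_num),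
    ← rpow_mul (by norm_num)]
  norm_num

lemma sixteen_mul_mul_pow_three_le (t u : ℝ) :
    16 * t * u ^ 3 ≤ 3 * √3 * (u ^ 2 + t ^ 2) ^ 2 := by
  have hs : √3 ^ 2 = 3 := sq_sqrt (by norm_num)
  have hfactor : 3 * √3 * (u ^ 2 + t ^ 2) ^ 2 - 16 * t * u ^ 3
      = (u - √3 * t) ^ 2 * (3 * √3 * u ^ 2 + 2 * t * u + √3 * t ^ 2) := by
    linear_combination (6 * t * u ^ 3 - 3 * √3 * t ^ 2 * u ^ 2 - √3 * t ^ 4) * hs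
  have hdef : 0 ≤ 3 * √3 * u ^ 2 + 2 * t * u + √3 * t ^ 2 := by
    nlinarith [mul_nonneg (sqrt_nonneg 3) (sq_nonneg (√3 * u + t)),
      mul_nonneg (sqrt_nonneg 3) (sq_nonneg u), mul_nonneg (sqrt_nonneg 3) (sq_nonneg t)]
  nlinarith [mul_nonneg (sq_nonneg (u - √3 * t)) hdef]

lemma sqrt_sub_div_le {t : ℝ} (ht : 0 < t) (x : ℝ) :
    (√(t ^ 2 + x ^ 2) - x) / (t ^ 2 + x ^ 2) ≤ 3 * √3 / (4 * t) := by
  set r := √(t ^ 2 + x ^ 2)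
  have hr2 : r ^ 2 = t ^ 2 + x ^ 2 := sq_sqrt (by positivity)
  have hu : 0 < r - x := sub_pos.mpr <| (le_abs_self x).trans_lt <| by
    rw [← sqrt_sq_eq_abs]; exact sqrt_lt_sqrt (sq_nonneg x) (by linarith [pow_pos ht 2])
  have hur : 2 * (r - x) * r = (r - x) ^ 2 + t ^ 2 := by linear_combination hr2
  rw [div_le_div_iff₀ (by positivity) (by positivity), ← hr2]
  refine le_of_mul_le_mul_left ?_ (by positivity : 0 < 4 * (r - x) ^ 2)
  calc 4 * (r - x) ^ 2 * ((r - x) * (4 * t)) = 16 * t * (r - x) ^ 3 := by ring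
    _ ≤ 3 * √3 * ((r - x) ^ 2 + t ^ 2) ^ 2 := sixteen_mul_mul_pow_three_le t (r - x)
    _ = 4 * (r - x) ^ 2 * (3 * √3 * r ^ 2) := by rw [← hur]; ring

lemma sqrt_sub_div_at_neg_div_sqrt_three {t : ℝ} (ht : 0 < t) :
    (√(t ^ 2 + (-t / √3) ^ 2) - -t / √3) / (t ^ 2 + (-t / √3) ^ 2) = 3 * √3 / (4 * t) := by
  have hs : √3 ^ 2 = 3 := sq_sqrt (by norm_num)
  have hq : t ^ 2 + (-t / √3) ^ 2 = (2 * t / √3) ^ 2 := by rw [div_pow, div_pow, hs]; ring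
  rw [hq, sqrt_sq (by positivity)]
  field_simp
  ring

lemma sqrt_pi_mul_rpow_div_eq {t : ℝ} (ht : 0 ≤ t) :
    √π * (3 : ℝ) ^ ((3 : ℝ) / 4) / (4 * √t) = √(π / 4 * (3 * √3 / (4 * t))) := by
  rw [← sqrt_mul_div_two_mul_sqrt _ _ (by positivity), ← sqrt_three_mul_sqrt_three_eq_rpow,
    sqrt_mul pi_pos.le, sqrt_mul' 4 ht, show (4 : ℝ) = 2 ^ 2 by norm_num,
    sqrt_sq zero_le_two]
  ring

/-- The function `x ↦ √(π(√(t²+x²)-x))/(2√(t²+x²))` attains its supremum at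
`x = -t/√3`, with supremum value `√π·3^{3/4}/(4√t)`. -/
theorem sup_modified_hilbert_deriv (t : ℝ) (ht : 0 < t) :
    (∀ x : ℝ, Real.sqrt (π * (Real.sqrt (t ^ 2 + x ^ 2) - x)) /
        (2 * Real.sqrt (t ^ 2 + x ^ 2)) ≤
      Real.sqrt π * (3 : ℝ) ^ ((3 : ℝ) / 4) / (4 * Real.sqrt t)) ∧
    Real.sqrt (π * (Real.sqrt (t ^ 2 + (-t / Real.sqrt 3) ^ 2) - (-t / Real.sqrt 3))) /
        (2 * Real.sqrt (t ^ 2 + (-t / Real.sqrt 3) ^ 2))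
      = Real.sqrt π * (3 : ℝ) ^ ((3 : ℝ) / 4) / (4 * Real.sqrt t) := by
  rw [sqrt_pi_mul_rpow_div_eq ht.le]
  refine ⟨fun x ↦ ?_, ?_⟩
  all_goals rw [sqrt_mul_div_two_mul_sqrt _ _ (by positivity)]
  · exact sqrt_le_sqrt (mul_le_mul_of_nonneg_left (sqrt_sub_div_le ht x) (by positivity))
  · rw [sqrt_sub_div_at_neg_div_sqrt_three ht]
end
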